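/- If a rational function F(t) has all its poles on the unit circle, agrees on the unit circle with a Laurent polynomial, and tends to 0 as |t| → ∞ and also as t → 0, then F is identically zero. -/

import Mathlib

/-!
On the unit circle `P/Q` equals the Laurent polynomial `M(t)/t^N` for a polynomial `M`; as the
circle is infinite this gives the polynomial identity `X^N P = M Q`, so
`P/Q = M(t)/t^N` wherever `Q(t) ≠ 0`, in particular for all `|t| ≠ 1`. Vanishing at `0` forces
`X^(N+1) ∣ M`, say `M = X^(N+1) R`; then `P/Q = t R(t)` for `|t| > 1`, and a polynomial tending
to `0` at infinity is zero. Hence `M = 0`.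
-/

open Complex Polynomial Finset Filter

open Topology Bornology

namespace Polynomial

variable {𝕜 : Type*} [NontriviallyNormedField 𝕜]

theorem X_dvd_of_tendsto_nhdsNE (p : 𝕜[X]) (h : Tendsto p.eval (𝓝[≠] 0) (𝓝 0)) : X ∣ p := by
  have hp0 : p.eval 0 = 0 :=
    tendsto_nhds_unique (p.continuous.continuousAt.tendsto.mono_left nhdsWithin_le_nhds) h
  rwa [X_dvd_iff, coeff_zero_eq_eval_zero]

theorem X_pow_succ_dvd_of_tendsto_div_pow (p : 𝕜[X]) (k : ℕ)
    (h : Tendsto (fun t => p.eval t / t ^ k) (𝓝[≠] 0) (𝓝 0)) : X ^ (k + 1) ∣ p := by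
  induction k generalizing p with
  | zero => simpa using p.X_dvd_of_tendsto_nhdsNE (by simpa using h)
  | succ k ih =>
    have hk : Tendsto (fun t => p.eval t / t ^ k) (𝓝[≠] 0) (𝓝 0) := by
      have hid : Tendsto (fun t => t) (𝓝[≠] (0 : 𝕜)) (𝓝 0) := nhdsWithin_le_nhds
      refine (zero_mul (0 : 𝕜) ▸ hid.mul h).congr' ?_
      filter_upwards [self_mem_nhdsWithin] with t (ht : t ≠ 0)
      field_simp
      ring
    obtain ⟨q, rfl⟩ := ih p hk
    have hq : Tendsto q.eval (𝓝[≠] 0) (𝓝 0) := by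
      refine h.congr' ?_
      filter_upwards [self_mem_nhdsWithin] with t (ht : t ≠ 0)
      simp [ht]
    obtain ⟨r, rfl⟩ := q.X_dvd_of_tendsto_nhdsNE hq
    exact ⟨r, by ring⟩

theorem eq_zero_of_tendsto_cobounded (p : 𝕜[X]) (h : Tendsto p.eval (cobounded 𝕜) (𝓝 0)) :
    p = 0 := by
  by_cases hdeg : 0 < p.degree
  · exact absurd (p.tendsto_norm_atTop hdeg tendsto_norm_cobounded_atTop)
      (not_tendsto_atTop_of_tendsto_nhds h.norm)
  · rw [eq_C_of_degree_le_zero (not_lt.mp hdeg)] at h ⊢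
    simpa using h

end Polynomial

theorem Complex.sphere_zero_one_infinite : (Metric.sphere (0 : ℂ) 1).Infinite :=
  (isPreconnected_sphere (by simp) 0 1).infinite_of_nontrivial
    ⟨1, by simp, -1, by simp, by norm_num⟩

section Laurent

variable {K : Type*} [Field K]

noncomputable def laurentNumerator (N : ℕ) (a : ℤ → K) : K[X] :=
  ∑ n ∈ Icc (-(N : ℤ)) N, C (a n) * X ^ (n + N).toNat

theorem eval_laurentNumerator (N : ℕ) (a : ℤ → K) {t : K} (ht : t ≠ 0) :
    (laurentNumerator N a).eval t = (∑ n ∈ Icc (-(N : ℤ)) N, a n * t ^ n) * t ^ N := by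
  rw [laurentNumerator, eval_finsetSum, sum_mul]
  refine sum_congr rfl fun n hn => ?_
  have hnN : 0 ≤ n + N := by linarith [(mem_Icc.mp hn).1]
  rw [eval_mul, eval_C, eval_pow, eval_X, ← zpow_natCast, Int.toNat_of_nonneg hnN,
    zpow_add₀ ht, zpow_natCast, mul_assoc]

theorem div_eval_eq_of_X_pow_mul_eq {P Q M : K[X]} {N : ℕ} (h : X ^ N * P = M * Q) {t : K}
    (ht : t ≠ 0) (hQt : Q.eval t ≠ 0) : P.eval t / Q.eval t = M.eval t / t ^ N := by
  have := congrArg (eval t) h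
  simp only [eval_mul, eval_pow, eval_X] at this
  field_simp
  linear_combination this

end Laurent

theorem X_pow_mul_eq_laurentNumerator_mul_of_eqOn_circle (P Q : ℂ[X]) (hQ : Q ≠ 0) (N : ℕ)
    (a : ℤ → ℂ) (hagree : ∀ t : ℂ, ‖t‖ = 1 → Q.eval t ≠ 0 →
      P.eval t / Q.eval t = ∑ n ∈ Icc (-(N : ℤ)) N, a n * t ^ n) :
    X ^ N * P = laurentNumerator N a * Q := by
  refine eq_of_infinite_eval_eq _ _ <|
    (sphere_zero_one_infinite.sdiff (finite_setOfPred_isRoot hQ)).mono ?_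
  rintro t ⟨ht1, hQt : Q.eval t ≠ 0⟩
  rw [mem_sphere_zero_iff_norm] at ht1
  have ht0 : t ≠ 0 := norm_ne_zero_iff.mp (by simp [ht1])
  have hPt := hagree t ht1 hQt
  rw [div_eq_iff hQt] at hPt
  simp only [Set.mem_ofPred_eq, eval_mul, eval_pow, eval_X, eval_laurentNumerator N a ht0, hPt]
  ring

/-- A rational function `F = P/Q` whose poles all lie on the unit circle,
which agrees on the unit circle with a Laurent polynomial, and which tends to `0` as
`|t| → ∞` and as `t → 0`, is identically zero. -/
theorem rational_zero_of_laurent_on_circle_and_vanishing_limits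
    (P Q : Polynomial ℂ) (hQ : Q ≠ 0)
    (hpoles : ∀ z : ℂ, ‖z‖ ≠ 1 → Q.eval z ≠ 0)
    (N : ℕ) (a : ℤ → ℂ)
    (hagree : ∀ t : ℂ, ‖t‖ = 1 → Q.eval t ≠ 0 →
      P.eval t / Q.eval t = ∑ n ∈ Finset.Icc (-(N : ℤ)) (N : ℤ), a n * t ^ n)
    (hinf : Tendsto (fun t : ℂ => P.eval t / Q.eval t)
      (Filter.comap (fun z : ℂ => ‖z‖) Filter.atTop) (nhds 0))
    (hzero : Tendsto (fun t : ℂ => P.eval t / Q.eval t)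
      (nhdsWithin (0 : ℂ) {(0 : ℂ)}ᶜ) (nhds 0)) :
    ∀ t : ℂ, t ≠ 0 → Q.eval t ≠ 0 → P.eval t / Q.eval t = 0 := by
  set M := laurentNumerator N a
  have hkey := X_pow_mul_eq_laurentNumerator_mul_of_eqOn_circle P Q hQ N a hagree
  have hF : ∀ t : ℂ, t ≠ 0 → Q.eval t ≠ 0 → P.eval t / Q.eval t = M.eval t / t ^ N :=
    fun _ => div_eval_eq_of_X_pow_mul_eq hkey
  obtain ⟨R, hR⟩ : X ^ (N + 1) ∣ M := by
    refine M.X_pow_succ_dvd_of_tendsto_div_pow N (hzero.congr' ?_)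
    filter_upwards [self_mem_nhdsWithin, nhdsWithin_le_nhds (Metric.ball_mem_nhds 0 one_pos)]
      with t (ht : t ≠ 0) hlt
    exact hF t ht (hpoles t (mem_ball_zero_iff.mp hlt).ne)
  have hXR : X * R = 0 := by
    refine (X * R).eq_zero_of_tendsto_cobounded ((comap_norm_atTop (E := ℂ) ▸ hinf).congr' ?_)
    filter_upwards [eventually_cobounded_le_norm 2] with t ht
    have ht0 : t ≠ 0 := norm_pos_iff.mp (by linarith)
    rw [hF t ht0 (hpoles t (by linarith)), hR]
    simp only [eval_mul, eval_pow, eval_X]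
    field_simp
    ring
  intro t ht hQt
  rw [hF t ht hQt, hR, (mul_eq_zero.mp hXR).resolve_left X_ne_zero]
  simp
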